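/- arXiv:1906.02608 — 4 statements merged into one kernel-verified Lean document; each statement's English description precedes it below -/
import Mathlib

section
/- If z_t satisfies the Hamiltonian descent ODE ż_t = J∇H(z_t) + z⋆ − z_t, then d/dt H(z_t) ≤ −H(z_t), and consequently 0 ≤ H(z_t) ≤ H(z_0)·exp(−t) for all t ≥ 0; i.e., the Hamiltonian converges to zero linearly. -/
/-! Along the flow, `d/dt H(z_t) = ⟪∇H(z_t), J∇H(z_t)⟫ + ⟪∇H(z_t), z⋆ - z_t⟫`. The first term
vanishes because `J` is skew-symmetric, and the second is at most `H(z⋆) - H(z_t) = -H(z_t)` by the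
first-order characterisation of convexity. Grönwall's inequality turns `d/dt H ≤ -H` into
`H(z_t) ≤ H(z_0) e^{-t}`. -/

open RealInnerProductSpace

/-- The standard symplectic matrix `J` on `ℝ^{2n}`: `J (x, p) = (p, -x)`. -/
def Jmap (n : ℕ) (v : EuclideanSpace ℝ (Fin n ⊕ Fin n)) :
    EuclideanSpace ℝ (Fin n ⊕ Fin n) :=
  WithLp.toLp 2 (fun i => Sum.elim (fun a => v (Sum.inr a)) (fun a => -(v (Sum.inl a))) i)

theorem inner_Jmap_self (n : ℕ) (v : EuclideanSpace ℝ (Fin n ⊕ Fin n)) :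
    ⟪v, Jmap n v⟫ = 0 := by
  simp [PiLp.inner_apply, Fintype.sum_sum_type, Jmap, mul_comm]

theorem ConvexOn.apply_sub_le_sub_of_hasFDerivAt {E : Type*} [NormedAddCommGroup E] [NormedSpace ℝ E]
    {s : Set E} {f : E → ℝ} {f' : E →L[ℝ] ℝ} {x y : E} (hf : ConvexOn ℝ s f)
    (hx : x ∈ s) (hy : y ∈ s) (hf' : HasFDerivAt f f' x) :
    f' (y - x) ≤ f y - f x := by
  set L : ℝ →ᵃ[ℝ] E := AffineMap.lineMap x y
  have hL : ConvexOn ℝ (L ⁻¹' s) (f ∘ L) := hf.comp_affineMap L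
  have hderiv : HasDerivAt (f ∘ L) (f' (y - x)) 0 :=
    HasFDerivAt.comp_hasDerivAt _ (by simpa [L] using hf') AffineMap.hasDerivAt_lineMap
  simpa [L, slope_def_field] using
    hL.le_slope_of_hasDerivAt (by simpa [L]) (by simpa [L]) zero_lt_one hderiv

theorem le_mul_exp_of_hasDerivAt_le_mul {f f' : ℝ → ℝ} {K : ℝ}
    (hf : ∀ t, HasDerivAt f (f' t) t) (bound : ∀ t, f' t ≤ K * f t) {t : ℝ} (ht : 0 ≤ t) :
    f t ≤ f 0 * Real.exp (K * t) := by
  have := le_gronwallBound_of_liminf_deriv_right_le (f := f) (f' := f') (δ := f 0) (K := K)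
    (ε := 0) (a := 0) (b := t) (fun s _ => (hf s).continuousAt.continuousWithinAt)
    (fun s _ _ hr => (hf s).hasDerivWithinAt.liminf_right_slope_le hr) le_rfl
    (fun s _ => by simpa using bound s) t ⟨ht, le_rfl⟩
  simpa [gronwallBound_ε0] using this

theorem ConvexOn.inner_add_sub_le_of_hasGradientAt {E : Type*} [NormedAddCommGroup E]
    [InnerProductSpace ℝ E] [CompleteSpace E] {H : E → ℝ} (hH : ConvexOn ℝ Set.univ H)
    {x g w : E} (hg : HasGradientAt H g x) (hw : ⟪g, w⟫ = 0) (y : E) :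
    ⟪g, w + y - x⟫ ≤ H y - H x := by
  rw [add_sub_assoc, inner_add_right, hw, zero_add]
  simpa using hH.apply_sub_le_sub_of_hasFDerivAt (Set.mem_univ x) (Set.mem_univ y) hg.hasFDerivAt

/-- If `z_t` satisfies the Hamiltonian descent ODE `ż_t = J∇H(z_t) + z⋆ − z_t`,
then `d/dt H(z_t) ≤ −H(z_t)`, and consequently `0 ≤ H(z_t) ≤ H(z_0)·exp(−t)` for
all `t ≥ 0`. -/
theorem stmt2 (n : ℕ)
    (H : EuclideanSpace ℝ (Fin n ⊕ Fin n) → ℝ)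
    (hconv : ConvexOn ℝ Set.univ H)
    (hH : ∀ w, HasGradientAt H (gradient H w) w)
    (zstar : EuclideanSpace ℝ (Fin n ⊕ Fin n))
    (hmin : H zstar = 0) (hnonneg : ∀ w, 0 ≤ H w)
    (z : ℝ → EuclideanSpace ℝ (Fin n ⊕ Fin n))
    (hz : ∀ t, HasDerivAt z (Jmap n (gradient H (z t)) + zstar - z t) t) :
    (∀ t, deriv (fun s => H (z s)) t ≤ -H (z t)) ∧
      ∀ t, 0 ≤ t → 0 ≤ H (z t) ∧ H (z t) ≤ H (z 0) * Real.exp (-t) := by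
  set dH : ℝ → ℝ := fun t => ⟪gradient H (z t), Jmap n (gradient H (z t)) + zstar - z t⟫
  have hderiv : ∀ t, HasDerivAt (fun s => H (z s)) (dH t) t := fun t =>
    (hH (z t)).hasFDerivAt.comp_hasDerivAt t (hz t)
  have hbound : ∀ t, dH t ≤ -H (z t) := fun t =>
    (hconv.inner_add_sub_le_of_hasGradientAt (hH (z t)) (inner_Jmap_self n _) zstar).trans_eq
      (by rw [hmin, zero_sub])
  refine ⟨fun t => (hderiv t).deriv ▸ hbound t, fun t ht => ⟨hnonneg _, ?_⟩⟩
  simpa using le_mul_exp_of_hasDerivAt_le_mul (K := -1) hderiv (by simpa using hbound) ht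
end

section
/- Let M be nonsingular with MJMᵀ = J, and define H̄(y) = H(M⁻¹y). If y_t solves the Hamiltonian descent ODE for H̄ with target y⋆ = Mz⋆, and z_t = M⁻¹y_t, then z_t solves the Hamiltonian descent ODE for H with target z⋆; in particular H̄(y_t) = H(z_t) for all t. -/
/-
In the coordinates `z = M⁻¹ y` the gradient transforms contravariantly, `∇H̄(y) = M⁻ᵀ ∇H(z)`,
while the vector field `J ∇H̄` is pulled back by `M⁻¹`. The symplectic condition
`M J Mᵀ = J` implies `M⁻¹ J M⁻ᵀ = J`, so `M⁻¹ J ∇H̄(y) = J ∇H(z)`; the affine part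
`y⋆ - y` is mapped to `z⋆ - z` by linearity.
-/

open RealInnerProductSpace

open ContinuousLinearMap

section

variable {E F : Type*} [NormedAddCommGroup E] [InnerProductSpace ℝ E] [CompleteSpace E]
  [NormedAddCommGroup F] [InnerProductSpace ℝ F] [CompleteSpace F]

theorem HasGradientAt.comp_continuousLinearMap {f : F → ℝ} {g : F} {x : E} (A : E →L[ℝ] F)
    (hf : HasGradientAt f g (A x)) : HasGradientAt (fun v => f (A v)) (adjoint A g) x := by
  rw [hasGradientAt_iff_hasFDerivAt]
  refine (hf.hasFDerivAt.comp x A.hasFDerivAt).congr_fderiv ?_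
  ext v
  simp [InnerProductSpace.toDual_apply_apply, adjoint_inner_left]

theorem ContinuousLinearEquiv.adjoint_apply_adjoint_symm_apply (M : E ≃L[ℝ] F) (g : E) :
    adjoint (M : E →L[ℝ] F) (adjoint (M.symm : F →L[ℝ] E) g) = g := by
  rw [← comp_apply, ← adjoint_comp, M.coe_symm_comp_coe, adjoint_id, id_apply]

theorem ContinuousLinearEquiv.symm_conj_adjoint_symm_eq {J : E → E} (M : E ≃L[ℝ] E)
    (hM : ∀ v, M (J (adjoint (M : E →L[ℝ] E) v)) = J v) (g : E) :
    M.symm (J (adjoint (M.symm : E →L[ℝ] E) g)) = J g := by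
  rw [M.symm_apply_eq, ← hM, M.adjoint_apply_adjoint_symm_apply]

theorem HasDerivAt.symm_comp_of_hamiltonianDescent {J : E → E} {H : E → ℝ} (M : E ≃L[ℝ] E)
    (hM : ∀ v, M (J (adjoint (M : E →L[ℝ] E) v)) = J v) {zstar : E} {y : ℝ → E} {t : ℝ}
    (hH : DifferentiableAt ℝ H (M.symm (y t)))
    (hy : HasDerivAt y (J (gradient (fun v => H (M.symm v)) (y t)) + M zstar - y t) t) :
    HasDerivAt (fun s => M.symm (y s)) (J (gradient H (M.symm (y t))) + zstar - M.symm (y t)) t := by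
  have hgrad : gradient (fun v => H (M.symm v)) (y t)
      = adjoint (M.symm : E →L[ℝ] E) (gradient H (M.symm (y t))) :=
    (hH.hasGradientAt.comp_continuousLinearMap (M.symm : E →L[ℝ] E)).gradient
  refine ((M.symm : E →L[ℝ] E).hasFDerivAt.comp_hasDerivAt t hy).congr_deriv ?_
  simp only [ContinuousLinearEquiv.coe_coe, map_sub, map_add, M.symm_apply_apply, hgrad,
    M.symm_conj_adjoint_symm_eq hM]

end

/-- Affine invariance of Hamiltonian descent: if `M` is nonsingular with
`M J Mᵀ = J` and `H̄(y) = H(M⁻¹ y)`, and `y_t` solves the Hamiltonian descent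
ODE for `H̄` with target `y⋆ = M z⋆`, then `z_t = M⁻¹ y_t` solves the
Hamiltonian descent ODE for `H` with target `z⋆`; in particular
`H̄(y_t) = H(z_t)` for all `t`. -/
theorem stmt5 (n : ℕ)
    (H : EuclideanSpace ℝ (Fin n ⊕ Fin n) → ℝ)
    (hH : ∀ w, HasGradientAt H (gradient H w) w)
    (zstar : EuclideanSpace ℝ (Fin n ⊕ Fin n))
    (M : EuclideanSpace ℝ (Fin n ⊕ Fin n) ≃L[ℝ] EuclideanSpace ℝ (Fin n ⊕ Fin n))
    (hM : ∀ v, M (Jmap n (ContinuousLinearMap.adjoint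
      (M : EuclideanSpace ℝ (Fin n ⊕ Fin n) →L[ℝ] EuclideanSpace ℝ (Fin n ⊕ Fin n)) v))
      = Jmap n v)
    (Hbar : EuclideanSpace ℝ (Fin n ⊕ Fin n) → ℝ)
    (hHbar : ∀ y, Hbar y = H (M.symm y))
    (y : ℝ → EuclideanSpace ℝ (Fin n ⊕ Fin n))
    (hy : ∀ t, HasDerivAt y (Jmap n (gradient Hbar (y t)) + M zstar - y t) t)
    (z : ℝ → EuclideanSpace ℝ (Fin n ⊕ Fin n))
    (hzy : ∀ t, z t = M.symm (y t)) :
    (∀ t, HasDerivAt z (Jmap n (gradient H (z t)) + zstar - z t) t) ∧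
      ∀ t, Hbar (y t) = H (z t) := by
  obtain rfl : Hbar = fun v => H (M.symm v) := funext hHbar
  obtain rfl : z = fun t => M.symm (y t) := funext hzy
  exact ⟨fun t => (hy t).symm_comp_of_hamiltonianDescent M hM (hH _).differentiableAt,
    fun t => rfl⟩
end

section
/- The full duality gap dominates the partial duality gap: for all y ∈ ℝ^m and p ∈ ℝ^n, f(y) − d(p) ≥ D_h(Ay, x⋆) + D_{g*}(Aᵀp, q⋆) = gap(Ay, Aᵀp), where f(y) = h(Ay) + g(y) and d(p) = −h*(−p) − g*(Aᵀp). -/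
open RealInnerProductSpace

/-- The full duality gap dominates the partial duality gap: for all `y, p`,
`f(y) − d(p) ≥ D_h(Ay, x⋆) + D_{g*}(Aᵀp, q⋆) = gap(Ay, Aᵀp)`, where
`f(y) = h(Ay) + g(y)` and `d(p) = −h*(−p) − g*(Aᵀp)`.  Conjugacy of `(g, g*)`
and `(h, h*)` is encoded by the Fenchel–Young inequalities together with the
subgradient equality conditions `q⋆ ∈ ∂g(y⋆)` and `x⋆ ∈ ∂h*(−p⋆)` (equality in
Fenchel–Young at the optimal points), and strong duality `f(y⋆) = d(p⋆)`. -/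
theorem stmt12 (n m : ℕ)
    (h : EuclideanSpace ℝ (Fin n) → ℝ) (g : EuclideanSpace ℝ (Fin m) → ℝ)
    (hstar : EuclideanSpace ℝ (Fin n) → ℝ) (gstar : EuclideanSpace ℝ (Fin m) → ℝ)
    (hconvh : ConvexOn ℝ Set.univ h) (hconvg : ConvexOn ℝ Set.univ g)
    (hh : ∀ x, HasGradientAt h (gradient h x) x)
    (hg : ∀ q, HasGradientAt gstar (gradient gstar q) q)
    (A : EuclideanSpace ℝ (Fin m) →L[ℝ] EuclideanSpace ℝ (Fin n))
    (xstar : EuclideanSpace ℝ (Fin n)) (ystar : EuclideanSpace ℝ (Fin m))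
    (pstar : EuclideanSpace ℝ (Fin n)) (qstar : EuclideanSpace ℝ (Fin m))
    (hx : xstar = A ystar) (hq : qstar = ContinuousLinearMap.adjoint A pstar)
    (hgradh : gradient h xstar = -pstar)
    (hgradg : gradient gstar qstar = ystar)
    (hFYg : ∀ y q, ⟪y, q⟫ ≤ g y + gstar q)
    (hFYh : ∀ x u, ⟪x, u⟫ ≤ h x + hstar u)
    (heqg : g ystar + gstar qstar = ⟪ystar, qstar⟫)
    (heqh : h xstar + hstar (-pstar) = ⟪xstar, -pstar⟫)
    (hstrong : h (A ystar) + g ystar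
      = -(hstar (-pstar)) - gstar (ContinuousLinearMap.adjoint A pstar)) :
    ∀ (y : EuclideanSpace ℝ (Fin m)) (p : EuclideanSpace ℝ (Fin n)),
      (h (A y) + g y) - (-(hstar (-p)) - gstar (ContinuousLinearMap.adjoint A p)) ≥
        (h (A y) - h xstar - ⟪gradient h xstar, A y - xstar⟫)
          + (gstar (ContinuousLinearMap.adjoint A p) - gstar qstar
            - ⟪gradient gstar qstar, ContinuousLinearMap.adjoint A p - qstar⟫) := by
  intro y p
  rw [hgradh, hgradg]
  have hFY1 := hFYg y qstar
  have hFY2 := hFYh xstar (-p)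
  have e1 : ⟪(-pstar : EuclideanSpace ℝ (Fin n)), A y - xstar⟫ = -⟪qstar, y⟫ + ⟪pstar, xstar⟫ := by
    rw [inner_sub_right, inner_neg_left, inner_neg_left, hq,
      ContinuousLinearMap.adjoint_inner_left]
    ring
  have e2 : ⟪ystar, ContinuousLinearMap.adjoint A p - qstar⟫ = ⟪xstar, p⟫ - ⟪ystar, qstar⟫ := by
    rw [inner_sub_right, hx, ContinuousLinearMap.adjoint_inner_right]
  have e3 : ⟪ystar, qstar⟫ = ⟪pstar, xstar⟫ := by
    rw [hq, ContinuousLinearMap.adjoint_inner_right, hx, real_inner_comm]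
  have e4 : ⟪xstar, -p⟫ = -⟪xstar, p⟫ := inner_neg_right _ _
  have e5 : ⟪y, qstar⟫ = ⟪qstar, y⟫ := real_inner_comm _ _
  have e6 : ⟪xstar, -pstar⟫ = -⟪pstar, xstar⟫ := by rw [inner_neg_right, real_inner_comm]
  linarith
end

section
/- The full duality gap decomposes as the sum of four nonnegative (pseudo-)Bregman divergences: f(y) − d(p) = D_h(Ay, x⋆) + D̂_g(y, y⋆) + D̂_{h*}(−p, −p⋆) + D_{g*}(Aᵀp, q⋆). -/
open RealInnerProductSpace

/-- The full duality gap decomposes as the sum of four nonnegative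
(pseudo-)Bregman divergences:
`f(y) − d(p) = D_h(Ay, x⋆) + D̂_g(y, y⋆) + D̂_{h*}(−p, −p⋆) + D_{g*}(Aᵀp, q⋆)`,
where `D̂_g(y, y⋆) = g(y) − g(y⋆) − q⋆ᵀ(y − y⋆)` and
`D̂_{h*}(−p, −p⋆) = h*(−p) − h*(−p⋆) − x⋆ᵀ(−p + p⋆)`. -/
theorem stmt13 (n m : ℕ)
    (h : EuclideanSpace ℝ (Fin n) → ℝ) (g : EuclideanSpace ℝ (Fin m) → ℝ)
    (hstar : EuclideanSpace ℝ (Fin n) → ℝ) (gstar : EuclideanSpace ℝ (Fin m) → ℝ)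
    (hconvh : ConvexOn ℝ Set.univ h) (hconvg : ConvexOn ℝ Set.univ g)
    (hh : ∀ x, HasGradientAt h (gradient h x) x)
    (hg : ∀ q, HasGradientAt gstar (gradient gstar q) q)
    (A : EuclideanSpace ℝ (Fin m) →L[ℝ] EuclideanSpace ℝ (Fin n))
    (xstar : EuclideanSpace ℝ (Fin n)) (ystar : EuclideanSpace ℝ (Fin m))
    (pstar : EuclideanSpace ℝ (Fin n)) (qstar : EuclideanSpace ℝ (Fin m))
    (hx : xstar = A ystar) (hq : qstar = ContinuousLinearMap.adjoint A pstar)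
    (hgradh : gradient h xstar = -pstar)
    (hgradg : gradient gstar qstar = ystar)
    (hstrong : h (A ystar) + g ystar
      = -(hstar (-pstar)) - gstar (ContinuousLinearMap.adjoint A pstar)) :
    ∀ (y : EuclideanSpace ℝ (Fin m)) (p : EuclideanSpace ℝ (Fin n)),
      (h (A y) + g y) - (-(hstar (-p)) - gstar (ContinuousLinearMap.adjoint A p)) =
        (h (A y) - h xstar - ⟪gradient h xstar, A y - xstar⟫)
          + (g y - g ystar - ⟪qstar, y - ystar⟫)
          + (hstar (-p) - hstar (-pstar) - ⟪xstar, -p + pstar⟫)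
          + (gstar (ContinuousLinearMap.adjoint A p) - gstar qstar
            - ⟪gradient gstar qstar, ContinuousLinearMap.adjoint A p - qstar⟫) := by
  intro y p
  subst hx hq
  simp only [hgradh, hgradg, inner_sub_right, inner_add_right, inner_neg_right,
    inner_neg_left, ContinuousLinearMap.adjoint_inner_left, ContinuousLinearMap.adjoint_inner_right]
  linarith
end
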